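/- The kernel of an order bounded linear functional l on a Riesz space X is a Grothendieck subspace if and only if the modulus |l| is the sum of two Riesz homomorphisms X → ℝ. -/

import Mathlib

variable {X : Type*} [Lattice X] [AddCommGroup X]
  [CovariantClass X X (· + ·) (· ≤ ·)] [Module ℝ X] [PosSMulMono ℝ X]

/-- A Grothendieck subspace: closed under `x ⊔ y ⊔ 0 + x ⊓ y ⊓ 0`. -/
def IsGrothendieckSubspace (H : Submodule ℝ X) : Prop :=
  ∀ x ∈ H, ∀ y ∈ H, x ⊔ y ⊔ 0 + x ⊓ y ⊓ 0 ∈ H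

/-- A Riesz subspace: closed under the lattice operations. -/
def IsRieszSubspace (H : Submodule ℝ X) : Prop :=
  ∀ x ∈ H, ∀ y ∈ H, x ⊔ y ∈ H ∧ x ⊓ y ∈ H

/-- A Riesz homomorphism: a linear map preserving finite suprema. -/
def IsRieszHom (f : X →ₗ[ℝ] ℝ) : Prop :=
  ∀ x y : X, f (x ⊔ y) = f x ⊔ f y

/-- A positive linear functional. -/
def IsPositive (f : X →ₗ[ℝ] ℝ) : Prop :=
  ∀ x : X, 0 ≤ x → 0 ≤ f x

/-- `p` is the positive part of the order bounded functional `l`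
(so `l₋ = p - l` and `|l| = p + (p - l)`). -/
def IsPosPartOf (l p : X →ₗ[ℝ] ℝ) : Prop :=
  IsPositive p ∧ IsPositive (p - l) ∧
    ∀ x : X, 0 ≤ x → p x = sSup {r : ℝ | ∃ y : X, 0 ≤ y ∧ y ≤ x ∧ l y = r}


/-!
Write `m = p + (p - l)` for the modulus `|l|`. If `m = f + g` with Riesz homomorphisms `f`, `g`,
then `|l x| ≤ m |x| = |f x| + |g x|`, so `l` vanishes on `ker f ⊓ ker g` and hence
`l = α • f + β • g`. Both `f` and `g` commute with `(x, y) ↦ x ⊔ y ⊔ 0 + x ⊓ y ⊓ 0`, which is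
homogeneous on `ℝ`, so `ker l` is closed under it.

Conversely, for `a, b, c ≥ 0` with `l = ±1` on each, the Grothendieck property applied to `a - b`
and `a - c` (or `a + c` when the signs differ) forces `1 ≤ m (a ⊓ b) + m (a ⊓ c) + m (b ⊓ c)`.
As the supremum formula for `p` yields, below each `e ≥ 0`, some `e'` with `m e ≤ 3 |l e'|`,
rescaling shows that `m` has no three positive elements of large mass and small pairwise
overlaps. If `m` is not itself a Riesz homomorphism, take disjoint `a, b ≥ 0` of positive mass
and split `m = F + (m - F)`, where `F` is the component of `m` in the band generated by `a`.
A disjoint pair on which `F` (resp. `m - F`) does not vanish would form such a forbidden triple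
together with `b` (resp. `a`); hence `F` and `m - F` are Riesz homomorphisms.
-/

open LinearMap (ker)
open scoped NNReal

lemma inf_eq_zero_of_le_of_le {α : Type*} [Lattice α] [Zero α] {u v u' v' : α}
    (hu : 0 ≤ u) (hv : 0 ≤ v) (huu' : u ≤ u') (hvv' : v ≤ v') (h : u' ⊓ v' = 0) : u ⊓ v = 0 :=
  le_antisymm (h ▸ inf_le_inf huu' hvv') (le_inf hu hv)

lemma inf_add_le_inf_add_inf {α : Type*} [Lattice α] [AddCommGroup α] [AddLeftMono α]
    {a b c : α} (ha : 0 ≤ a) (hb : 0 ≤ b) (hc : 0 ≤ c) : a ⊓ (b + c) ≤ a ⊓ b + a ⊓ c := by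
  have h₁ : a ⊓ (b + c) ≤ a ⊓ b + c := by
    rw [← sub_le_iff_le_add, inf_sub, add_sub_cancel_right]
    exact inf_le_inf_right b (sub_le_self a hc)
  have h₂ : a ⊓ (b + c) ≤ a ⊓ b + a := inf_le_left.trans (le_add_of_nonneg_left (le_inf ha hb))
  simpa only [← add_inf, inf_comm c a] using le_inf h₁ h₂

section RieszSpace
variable {E : Type*} [Lattice E] [AddCommGroup E] [Module ℝ E] [PosSMulMono ℝ E]

lemma smul_inf_of_nonneg {s : ℝ} (hs : 0 ≤ s) (x y : E) : s • (x ⊓ y) = s • x ⊓ s • y := by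
  rcases hs.eq_or_lt with rfl | hs
  · simp
  · exact (OrderIso.smulRight hs).map_inf x y

lemma inf_smul_eq_zero [AddLeftMono E] {a b : E} (ha : 0 ≤ a) (hb : 0 ≤ b) (hab : a ⊓ b = 0)
    {t : ℝ} (ht : 0 ≤ t) : a ⊓ t • b = 0 := by
  refine inf_eq_zero_of_le_of_le ha (smul_nonneg ht hb) (u' := (t + 1) • a) (v' := (t + 1) • b)
    ?_ ?_ (by rw [← smul_inf_of_nonneg (by positivity), hab, smul_zero])
  · rw [add_smul, one_smul]
    exact le_add_of_nonneg_left (smul_nonneg ht ha)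
  · rw [add_smul, one_smul]
    exact le_add_of_nonneg_right hb

end RieszSpace

def grothendieckOp {α : Type*} [Lattice α] [Add α] [Zero α] (x y : α) : α :=
  x ⊔ y ⊔ 0 + x ⊓ y ⊓ 0

lemma grothendieckOp_mul (c a b : ℝ) :
    grothendieckOp (c * a) (c * b) = c * grothendieckOp a b := by
  rcases le_total 0 c with hc | hc
  · have hmono := monotone_mul_left_of_nonneg hc
    simp only [grothendieckOp, mul_add, hmono.map_max, hmono.map_min, mul_zero]
  · have hanti := antitone_mul_left hc
    simp only [grothendieckOp, mul_add, hanti.map_max, hanti.map_min, mul_zero, add_comm]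

lemma mul_grothendieckOp_add_mul_grothendieckOp_eq_zero {α β a b c d : ℝ}
    (h₁ : α * a + β * c = 0) (h₂ : α * b + β * d = 0) :
    α * grothendieckOp a b + β * grothendieckOp c d = 0 := by
  rcases eq_or_ne β 0 with rfl | hβ
  · rcases eq_or_ne α 0 with rfl | hα
    · simp
    · obtain ⟨rfl, rfl⟩ : a = 0 ∧ b = 0 := by simp_all
      simp [grothendieckOp]
  · have hc : c = -α / β * a := by field_simp; linarith
    have hd : d = -α / β * b := by field_simp; linarith
    rw [hc, hd, grothendieckOp_mul]
    field_simp
    ring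

section Functionals
variable {E : Type*} [Lattice E] [AddCommGroup E] [Module ℝ E] {f g l m p : E →ₗ[ℝ] ℝ}

lemma IsPositive.monotone [AddLeftMono E] (hf : IsPositive f) : Monotone f := fun x y hxy => by
  simpa using hf (y - x) (sub_nonneg.2 hxy)

lemma isPositive_of_abs_apply_le (hlm : ∀ z, 0 ≤ z → |l z| ≤ m z) : IsPositive m :=
  fun z hz => (abs_nonneg _).trans (hlm z hz)

lemma IsPosPartOf.abs_apply_le (hp : IsPosPartOf l p) {z : E} (hz : 0 ≤ z) :
    |l z| ≤ (p + (p - l)) z := by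
  have h₁ := hp.1 z hz
  have h₂ := hp.2.1 z hz
  simp only [LinearMap.add_apply, LinearMap.sub_apply] at h₂ ⊢
  rw [abs_le]
  constructor <;> linarith

lemma abs_apply_le_apply_abs [AddLeftMono E] (hlm : ∀ z, 0 ≤ z → |l z| ≤ m z) (x : E) :
    |l x| ≤ m |x| :=
  calc |l x| = |l x⁺ - l x⁻| := by rw [← map_sub, posPart_sub_negPart]
    _ ≤ |l x⁺| + |l x⁻| := abs_sub _ _
    _ ≤ m x⁺ + m x⁻ := add_le_add (hlm _ (posPart_nonneg x)) (hlm _ (negPart_nonneg x))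
    _ = m |x| := by rw [← map_add, posPart_add_negPart]

lemma IsRieszHom.map_inf [AddLeftMono E] (hf : IsRieszHom f) (x y : E) : f (x ⊓ y) = f x ⊓ f y := by
  have h := congrArg f (inf_add_sup x y)
  rw [map_add, map_add, hf x y] at h
  linarith [inf_add_sup (f x) (f y)]

lemma IsRieszHom.map_abs (hf : IsRieszHom f) (x : E) : f |x| = |f x| := by
  rw [abs, abs, hf, map_neg]

lemma IsRieszHom.map_grothendieckOp [AddLeftMono E] (hf : IsRieszHom f) (x y : E) :
    f (grothendieckOp x y) = grothendieckOp (f x) (f y) := by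
  simp only [grothendieckOp, map_add, hf (x ⊔ y), hf x, hf.map_inf (x ⊓ y), hf.map_inf x, map_zero]

lemma IsPositive.isRieszHom [AddLeftMono E] (hf : IsPositive f)
    (hdisj : ∀ c d, 0 ≤ c → 0 ≤ d → c ⊓ d = 0 → f c = 0 ∨ f d = 0) : IsRieszHom f := by
  intro x y
  have hsup : f (x ⊔ y) = f x + f y - f (x ⊓ y) := by
    rw [eq_sub_iff_add_eq, add_comm, ← map_add, ← map_add, inf_add_sup]
  rcases hdisj (x - x ⊓ y) (y - x ⊓ y) (sub_nonneg.2 inf_le_left) (sub_nonneg.2 inf_le_right)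
    (by rw [← inf_sub, sub_self]) with h | h <;> rw [map_sub, sub_eq_zero] at h
  · rw [hsup, h, add_sub_cancel_left, eq_comm, sup_eq_right]
    exact hf.monotone inf_le_right
  · rw [hsup, h, add_sub_cancel_right, eq_comm, sup_eq_left]
    exact hf.monotone inf_le_left

lemma isGrothendieckSubspace_ker_smul_add_smul [AddLeftMono E] (hf : IsRieszHom f)
    (hg : IsRieszHom g) (α β : ℝ) : IsGrothendieckSubspace (ker (α • f + β • g)) := by
  intro x hx y hy
  simp only [LinearMap.mem_ker, LinearMap.add_apply, LinearMap.smul_apply, smul_eq_mul] at hx hy ⊢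
  change α * f (grothendieckOp x y) + β * g (grothendieckOp x y) = 0
  rw [hf.map_grothendieckOp, hg.map_grothendieckOp]
  exact mul_grothendieckOp_add_mul_grothendieckOp_eq_zero hx hy

lemma exists_smul_add_smul_eq [AddLeftMono E] (hf : IsRieszHom f) (hg : IsRieszHom g)
    (hlm : ∀ z, 0 ≤ z → |l z| ≤ (f + g) z) : ∃ α β : ℝ, α • f + β • g = l := by
  have hker : ⨅ i, ker (![f, g] i) ≤ ker l := by
    intro z hz
    simp only [Submodule.mem_iInf, Fin.forall_fin_two, Matrix.cons_val_zero, Matrix.cons_val_one,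
      LinearMap.mem_ker] at hz
    have := abs_apply_le_apply_abs hlm z
    rwa [LinearMap.add_apply, hf.map_abs, hg.map_abs, hz.1, hz.2, abs_zero, add_zero,
      abs_nonpos_iff] at this
  have := mem_span_of_iInf_ker_le_ker hker
  rwa [Matrix.range_cons_cons_empty, Submodule.mem_span_pair] at this

end Functionals

section GrothendieckKernel
variable {E : Type*} [Lattice E] [AddCommGroup E] [AddLeftMono E] [Module ℝ E] {l m : E →ₗ[ℝ] ℝ}
  {a b c : E}

lemma one_le_sum_apply_inf_of_apply_eq_one (hG : IsGrothendieckSubspace (ker l))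
    (hlm : ∀ z, 0 ≤ z → |l z| ≤ m z) (ha : 0 ≤ a) (hb : 0 ≤ b) (hc : 0 ≤ c)
    (hla : l a = 1) (hlb : l b = 1) (hlc : l c = 1) :
    1 ≤ m (a ⊓ b) + m (a ⊓ c) + m (b ⊓ c) := by
  have hm := (isPositive_of_abs_apply_le hlm).monotone
  have hle : ∀ z, 0 ≤ z → l z ≤ m z := fun z hz => (le_abs_self _).trans (hlm z hz)
  have hw := hG (a - b) (by simp [hla, hlb]) (a - c) (by simp [hla, hlc])
  have e₁ : (a - b) ⊔ (a - c) ⊔ 0 = a ⊔ b ⊓ c - b ⊓ c := by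
    rw [sub_eq_add_neg, sub_eq_add_neg, ← add_sup, ← neg_inf, ← sub_eq_add_neg, sup_sub, sub_self]
  have e₂ : (a - b) ⊓ (a - c) ⊓ 0 = a ⊓ (b ⊔ c) - b ⊔ c := by
    rw [sub_eq_add_neg, sub_eq_add_neg, ← add_inf, ← neg_sup, ← sub_eq_add_neg, inf_sub, sub_self]
  rw [LinearMap.mem_ker, e₁, e₂, map_add, map_sub, map_sub] at hw
  have hbc : l (b ⊓ c) + l (b ⊔ c) = 2 := by
    rw [← map_add, inf_add_sup, map_add, hlb, hlc]
    norm_num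
  have h₁ : l (a ⊔ b ⊓ c - a) ≤ m (b ⊓ c) :=
    (hle _ (sub_nonneg.2 le_sup_left)).trans <| hm <| sub_le_iff_le_add'.2 <|
      sup_le (le_add_of_nonneg_right (le_inf hb hc)) (le_add_of_nonneg_left ha)
  have h₂ : l (a ⊓ (b ⊔ c)) ≤ m (a ⊓ b) + m (a ⊓ c) := by
    rw [← map_add]
    refine (hle _ (le_inf ha (hb.trans le_sup_left))).trans (hm ?_)
    calc a ⊓ (b ⊔ c) ≤ a ⊓ (b + c) :=
          inf_le_inf_left a (sup_le (le_add_of_nonneg_right hc) (le_add_of_nonneg_left hb))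
      _ ≤ a ⊓ b + a ⊓ c := inf_add_le_inf_add_inf ha hb hc
  rw [map_sub, hla] at h₁
  linarith

lemma one_le_apply_inf_of_apply_eq_neg_one (hG : IsGrothendieckSubspace (ker l))
    (hlm : ∀ z, 0 ≤ z → |l z| ≤ m z) (ha : 0 ≤ a) (hb : 0 ≤ b) (hc : 0 ≤ c)
    (hla : l a = 1) (hlb : l b = 1) (hlc : l c = -1) : 1 ≤ m (a ⊓ b) := by
  have hw := hG (a - b) (by simp [hla, hlb]) (a + c) (by simp [hla, hlc])
  have hbc : -b ≤ c := (neg_nonpos.2 hb).trans hc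
  have e₁ : (a - b) ⊔ (a + c) ⊔ 0 = a + c := by
    rw [sub_eq_add_neg, ← add_sup, sup_eq_right.2 hbc, sup_eq_left.2 (add_nonneg ha hc)]
  have e₂ : (a - b) ⊓ (a + c) ⊓ 0 = a ⊓ b - b := by
    rw [sub_eq_add_neg, ← add_inf, inf_eq_left.2 hbc, ← sub_eq_add_neg, inf_sub, sub_self]
  rw [LinearMap.mem_ker, e₁, e₂, map_add, map_add, map_sub, hla, hlb, hlc] at hw
  linarith [le_abs_self (l (a ⊓ b)), hlm _ (le_inf ha hb)]

lemma one_le_sum_apply_inf_of_apply_eq (hG : IsGrothendieckSubspace (ker l))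
    (hlm : ∀ z, 0 ≤ z → |l z| ≤ m z) (ha : 0 ≤ a) (hb : 0 ≤ b) (hc : 0 ≤ c)
    (hab : l a = l b) (hla : |l a| = 1) (hlc : |l c| = 1) :
    1 ≤ m (a ⊓ b) + m (a ⊓ c) + m (b ⊓ c) := by
  wlog hla' : l a = 1 generalizing l
  · have hla' : l a = -1 := ((abs_eq zero_le_one).1 hla).resolve_left hla'
    exact this (l := -l) (by rwa [LinearMap.ker_neg]) (by simpa using hlm) (by simp [hab])
      (by simpa using hla) (by simpa using hlc) (by simp [hla'])
  have hm := isPositive_of_abs_apply_le hlm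
  rcases (abs_eq zero_le_one).1 hlc with hlc | hlc
  · exact one_le_sum_apply_inf_of_apply_eq_one hG hlm ha hb hc hla' (hab ▸ hla') hlc
  · linarith [one_le_apply_inf_of_apply_eq_neg_one hG hlm ha hb hc hla' (hab ▸ hla') hlc,
      hm _ (le_inf ha hc), hm _ (le_inf hb hc)]

lemma one_le_sum_apply_inf (hG : IsGrothendieckSubspace (ker l))
    (hlm : ∀ z, 0 ≤ z → |l z| ≤ m z) (ha : 0 ≤ a) (hb : 0 ≤ b) (hc : 0 ≤ c)
    (hla : |l a| = 1) (hlb : |l b| = 1) (hlc : |l c| = 1) :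
    1 ≤ m (a ⊓ b) + m (a ⊓ c) + m (b ⊓ c) := by
  have : l a = l b ∨ l a = l c ∨ l b = l c := by
    rcases (abs_eq zero_le_one).1 hla with h | h <;>
      rcases (abs_eq zero_le_one).1 hlb with h' | h' <;>
      rcases (abs_eq zero_le_one).1 hlc with h'' | h'' <;> norm_num [h, h', h'']
  rcases this with h | h | h
  · exact one_le_sum_apply_inf_of_apply_eq hG hlm ha hb hc h hla hlc
  · have := one_le_sum_apply_inf_of_apply_eq hG hlm ha hc hb h hla hlb
    rw [inf_comm c b] at this
    linarith
  · have := one_le_sum_apply_inf_of_apply_eq hG hlm hb hc ha h hlb hla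
    rw [inf_comm b a, inf_comm c a] at this
    linarith

end GrothendieckKernel

section Modulus
variable {E : Type*} [Lattice E] [AddCommGroup E] [AddLeftMono E] [Module ℝ E] {l m p : E →ₗ[ℝ] ℝ}

lemma IsPositive.apply_inf_le_mul [PosSMulMono ℝ E] (hm : IsPositive m) {s : ℝ} (hs : 0 ≤ s)
    {u v x y : E} (hu : u ≤ s • x) (hv : v ≤ s • y) : m (u ⊓ v) ≤ s * m (x ⊓ y) := by
  rw [← smul_eq_mul, ← map_smul, smul_inf_of_nonneg hs]
  exact hm.monotone (inf_le_inf hu hv)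

lemma IsPosPartOf.exists_le_abs_apply (hp : IsPosPartOf l p) {e : E} (he : 0 ≤ e) :
    ∃ e', 0 ≤ e' ∧ e' ≤ e ∧ (p + (p - l)) e ≤ 3 * |l e'| := by
  have hpe := hp.1 e he
  have hqe := hp.2.1 e he
  have hsup := hp.2.2 e he
  simp only [LinearMap.add_apply, LinearMap.sub_apply] at hqe ⊢
  rcases (add_nonneg hpe hqe).eq_or_lt with h₀ | hpos
  · exact ⟨0, le_rfl, he, by rw [← h₀]; simp⟩
  have hne : {r | ∃ y, 0 ≤ y ∧ y ≤ e ∧ l y = r}.Nonempty := ⟨0, 0, le_rfl, he, map_zero l⟩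
  have : p e - (p e + (p e - l e)) / 6 < sSup {r | ∃ y, 0 ≤ y ∧ y ≤ e ∧ l y = r} := by
    rw [← hsup]
    linarith
  obtain ⟨_, ⟨y, hy₀, hye, rfl⟩, hy⟩ := exists_lt_of_lt_csSup hne this
  -- `l y` almost attains `p e`; take `e' = y` if `p e ≥ m e / 2`, else `e' = e - y`.
  rcases le_total (p e - l e) (p e) with h | h
  · exact ⟨y, hy₀, hye, by linarith [le_abs_self (l y)]⟩
  · refine ⟨e - y, sub_nonneg.2 hye, sub_le_self e hy₀, ?_⟩
    rw [map_sub]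
    linarith [neg_abs_le (l e - l y)]

lemma IsPosPartOf.exists_abs_apply_eq_one [PosSMulMono ℝ E] (hp : IsPosPartOf l p) {e : E}
    (he : 0 ≤ e) {r : ℝ} (hr : 0 < r) (hre : r ≤ (p + (p - l)) e) :
    ∃ u, 0 ≤ u ∧ u ≤ (3 / r) • e ∧ |l u| = 1 := by
  obtain ⟨e', he'₀, he'e, hle⟩ := hp.exists_le_abs_apply he
  have hl : 0 < |l e'| := by linarith
  have hinv : |l e'|⁻¹ ≤ 3 / r := by
    rw [inv_eq_one_div, div_le_div_iff₀ hl hr]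
    linarith
  refine ⟨|l e'|⁻¹ • e', smul_nonneg (inv_nonneg.2 hl.le) he'₀, ?_, ?_⟩
  · calc |l e'|⁻¹ • e' ≤ |l e'|⁻¹ • e := smul_le_smul_of_nonneg_left he'e (inv_nonneg.2 hl.le)
      _ ≤ (3 / r) • e := by
        rw [← sub_nonneg, ← sub_smul]
        exact smul_nonneg (sub_nonneg.2 hinv) he
  · rw [map_smul, smul_eq_mul, abs_mul, abs_inv, abs_abs, inv_mul_cancel₀ hl.ne']

end Modulus

def NoAlmostDisjointTriple {E : Type*} [Lattice E] [AddCommGroup E] [Module ℝ E]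
    (m : E →ₗ[ℝ] ℝ) : Prop :=
  ∀ a b c : E, 0 ≤ a → 0 ≤ b → 0 ≤ c →
    m a ⊓ m b ⊓ m c ≤ 3 * (m (a ⊓ b) + m (a ⊓ c) + m (b ⊓ c))

lemma IsPosPartOf.noAlmostDisjointTriple {E : Type*} [Lattice E] [AddCommGroup E] [AddLeftMono E]
    [Module ℝ E] [PosSMulMono ℝ E] {l p : E →ₗ[ℝ] ℝ} (hp : IsPosPartOf l p)
    (hG : IsGrothendieckSubspace (ker l)) : NoAlmostDisjointTriple (p + (p - l)) := by
  intro a b c ha hb hc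
  have hlm : ∀ z, 0 ≤ z → |l z| ≤ (p + (p - l)) z := fun _ => hp.abs_apply_le
  have hm := isPositive_of_abs_apply_le hlm
  by_contra! hlt
  set m := p + (p - l)
  set M := m a ⊓ m b ⊓ m c
  have hM : 0 < M := by
    linarith [hm _ (le_inf ha hb), hm _ (le_inf ha hc), hm _ (le_inf hb hc)]
  obtain ⟨u, hu₀, hua, hu⟩ := hp.exists_abs_apply_eq_one ha hM (inf_le_left.trans inf_le_left)
  obtain ⟨v, hv₀, hvb, hv⟩ := hp.exists_abs_apply_eq_one hb hM (inf_le_left.trans inf_le_right)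
  obtain ⟨w, hw₀, hwc, hw⟩ := hp.exists_abs_apply_eq_one hc hM inf_le_right
  have hs : 0 ≤ 3 / M := by positivity
  have hsum : 3 / M * (m (a ⊓ b) + m (a ⊓ c) + m (b ⊓ c)) < 1 := by
    rw [div_mul_eq_mul_div, div_lt_one hM]
    exact hlt
  linarith [one_le_sum_apply_inf hG hlm hu₀ hv₀ hw₀ hu hv hw, hm.apply_inf_le_mul hs hua hvb,
    hm.apply_inf_le_mul hs hua hwc, hm.apply_inf_le_mul hs hvb hwc]

section BandComponent
variable {E : Type*} [Lattice E] [AddCommGroup E] [Module ℝ E]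

lemma exists_linearMap_eq_of_nonneg [AddLeftMono E] [PosSMulMono ℝ E] (F : E → ℝ)
    (hadd : ∀ x y, 0 ≤ x → 0 ≤ y → F (x + y) = F x + F y)
    (hsmul : ∀ (r : ℝ) (x : E), 0 ≤ r → 0 ≤ x → F (r • x) = r * F x) :
    ∃ L : E →ₗ[ℝ] ℝ, ∀ x, 0 ≤ x → L x = F x := by
  have hdiff : ∀ x u v, 0 ≤ u → 0 ≤ v → x = u - v → F x⁺ - F x⁻ = F u - F v := by
    intro x u v hu hv hx
    have h : x⁺ + v = u + x⁻ := by
      rw [← sub_eq_sub_iff_add_eq_add, posPart_sub_negPart, hx]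
    have := congrArg F h
    rw [hadd _ _ (posPart_nonneg x) hv, hadd _ _ hu (negPart_nonneg x)] at this
    linarith
  have hF₀ : F 0 = 0 := by simpa using hsmul 0 0 le_rfl le_rfl
  refine ⟨{ toFun := fun x => F x⁺ - F x⁻, map_add' := fun x y => ?_, map_smul' := fun r x => ?_ },
    fun x hx => ?_⟩
  · rw [hdiff (x + y) (x⁺ + y⁺) (x⁻ + y⁻)
      (add_nonneg (posPart_nonneg x) (posPart_nonneg y))
      (add_nonneg (negPart_nonneg x) (negPart_nonneg y))
      (by rw [add_sub_add_comm, posPart_sub_negPart, posPart_sub_negPart]),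
      hadd _ _ (posPart_nonneg x) (posPart_nonneg y),
      hadd _ _ (negPart_nonneg x) (negPart_nonneg y)]
    ring
  · simp only [RingHom.id_apply, smul_eq_mul]
    rcases le_total 0 r with hr | hr
    · rw [hdiff (r • x) (r • x⁺) (r • x⁻) (smul_nonneg hr (posPart_nonneg x))
        (smul_nonneg hr (negPart_nonneg x)) (by rw [← smul_sub, posPart_sub_negPart]),
        hsmul _ _ hr (posPart_nonneg x), hsmul _ _ hr (negPart_nonneg x)]
      ring
    · have hr' : 0 ≤ -r := neg_nonneg.2 hr
      rw [hdiff (r • x) ((-r) • x⁻) ((-r) • x⁺) (smul_nonneg hr' (negPart_nonneg x))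
        (smul_nonneg hr' (posPart_nonneg x))
        (by rw [← smul_sub, ← neg_sub, posPart_sub_negPart, smul_neg, neg_smul, neg_neg]),
        hsmul _ _ hr' (posPart_nonneg x), hsmul _ _ hr' (negPart_nonneg x)]
      ring
  · simp [posPart_eq_self.2 hx, negPart_eq_zero.2 hx, hF₀]

/-- For `x ≥ 0`, the value at `x` of the component of `m` in the band generated by `a`. -/
noncomputable def bandComponent (m : E →ₗ[ℝ] ℝ) (a x : E) : ℝ :=
  ⨆ t : ℝ≥0, m (x ⊓ (t : ℝ) • a)

variable {m : E →ₗ[ℝ] ℝ} {a x y : E}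

lemma apply_inf_le_bandComponent [AddLeftMono E] (hm : IsPositive m) (x : E) (t : ℝ≥0) :
    m (x ⊓ (t : ℝ) • a) ≤ bandComponent m a x :=
  le_ciSup (f := fun t : ℝ≥0 => m (x ⊓ (t : ℝ) • a))
    ⟨m x, by rintro _ ⟨s, rfl⟩; exact hm.monotone inf_le_left⟩ t

lemma bandComponent_le [AddLeftMono E] (hm : IsPositive m) (x : E) : bandComponent m a x ≤ m x :=
  ciSup_le fun _ => hm.monotone inf_le_left

lemma bandComponent_nonneg [AddLeftMono E] (hm : IsPositive m) (hx : 0 ≤ x) :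
    0 ≤ bandComponent m a x := by
  simpa [inf_eq_right.2 hx] using apply_inf_le_bandComponent (a := a) hm x 0

lemma bandComponent_eq_of_le [AddLeftMono E] (hm : IsPositive m) {t : ℝ≥0}
    (hx : x ≤ (t : ℝ) • a) : bandComponent m a x = m x :=
  le_antisymm (bandComponent_le hm x) (by
    simpa [inf_eq_left.2 hx] using apply_inf_le_bandComponent (a := a) hm x t)

lemma exists_lt_apply_inf {ε : ℝ} (hε : 0 < ε) :
    ∃ t : ℝ≥0, bandComponent m a x - ε < m (x ⊓ (t : ℝ) • a) :=
  exists_lt_of_lt_ciSup (sub_lt_self _ hε)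

lemma bandComponent_add [AddLeftMono E] [PosSMulMono ℝ E] (hm : IsPositive m) (ha : 0 ≤ a)
    (hx : 0 ≤ x) (hy : 0 ≤ y) :
    bandComponent m a (x + y) = bandComponent m a x + bandComponent m a y := by
  apply le_antisymm
  · refine ciSup_le fun t => ?_
    calc m ((x + y) ⊓ (t : ℝ) • a) ≤ m (x ⊓ (t : ℝ) • a + y ⊓ (t : ℝ) • a) := by
          refine hm.monotone ?_
          rw [inf_comm (x + y), inf_comm x, inf_comm y]
          exact inf_add_le_inf_add_inf (smul_nonneg t.2 ha) hx hy
      _ ≤ bandComponent m a x + bandComponent m a y := by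
          rw [map_add]
          exact add_le_add (apply_inf_le_bandComponent hm x t) (apply_inf_le_bandComponent hm y t)
  · have key : ∀ s t : ℝ≥0,
        m (x ⊓ (s : ℝ) • a) + m (y ⊓ (t : ℝ) • a) ≤ bandComponent m a (x + y) := by
      intro s t
      rw [← map_add]
      refine (hm.monotone (le_inf (add_le_add inf_le_left inf_le_left) ?_)).trans
        (apply_inf_le_bandComponent hm (x + y) (s + t))
      rw [NNReal.coe_add, add_smul]
      exact add_le_add inf_le_right inf_le_right
    rw [← le_sub_iff_add_le]
    refine ciSup_le fun s => le_sub_comm.1 (ciSup_le fun t => ?_)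
    rw [le_sub_comm]
    exact le_sub_iff_add_le.2 (key s t)

lemma bandComponent_smul [PosSMulMono ℝ E] (ha : 0 ≤ a) {r : ℝ} (hr : 0 ≤ r) (x : E) :
    bandComponent m a (r • x) = r * bandComponent m a x := by
  rcases hr.eq_or_lt with rfl | hr
  · have h : ∀ t : ℝ≥0, (0 : E) ⊓ (t : ℝ) • a = 0 := fun t => inf_eq_left.2 (smul_nonneg t.2 ha)
    simp [bandComponent, h]
  lift r to ℝ≥0 using hr.le
  calc ⨆ t : ℝ≥0, m ((r : ℝ) • x ⊓ (t : ℝ) • a)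
      = ⨆ t : ℝ≥0, m ((r : ℝ) • x ⊓ ((r * t : ℝ≥0) : ℝ) • a) :=
        ((Equiv.mulLeft₀ r (by exact_mod_cast hr.ne')).iSup_comp
          (g := fun t : ℝ≥0 => m ((r : ℝ) • x ⊓ (t : ℝ) • a))).symm
    _ = ⨆ t : ℝ≥0, (r : ℝ) * m (x ⊓ (t : ℝ) • a) := by
        congr with t
        rw [NNReal.coe_mul, mul_smul, ← smul_inf_of_nonneg r.coe_nonneg, map_smul, smul_eq_mul]
    _ = r * bandComponent m a x := (Real.mul_iSup_of_nonneg r.2 _).symm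

end BandComponent

section Splitting
variable {E : Type*} [Lattice E] [AddCommGroup E] [AddLeftMono E] [Module ℝ E] [PosSMulMono ℝ E]
  {m : E →ₗ[ℝ] ℝ} {a b c d : E}

lemma bandComponent_eq_zero_or (hm : IsPositive m) (h3 : NoAlmostDisjointTriple m) (ha : 0 ≤ a)
    (hb : 0 ≤ b) (hab : a ⊓ b = 0) (hmb : 0 < m b) (hc : 0 ≤ c) (hd : 0 ≤ d) (hcd : c ⊓ d = 0) :
    bandComponent m a c = 0 ∨ bandComponent m a d = 0 := by
  by_contra! h
  obtain ⟨s, hs⟩ := exists_lt_apply_inf (m := m) (a := a) (x := c)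
    ((bandComponent_nonneg hm hc).lt_of_ne' h.1)
  obtain ⟨t, ht⟩ := exists_lt_apply_inf (m := m) (a := a) (x := d)
    ((bandComponent_nonneg hm hd).lt_of_ne' h.2)
  rw [sub_self] at hs ht
  have hc' : 0 ≤ c ⊓ (s : ℝ) • a := le_inf hc (smul_nonneg s.2 ha)
  have hd' : 0 ≤ d ⊓ (t : ℝ) • a := le_inf hd (smul_nonneg t.2 ha)
  have hba : ∀ r : ℝ≥0, b ⊓ (r : ℝ) • a = 0 :=
    fun r => inf_smul_eq_zero hb ha (by rwa [inf_comm]) r.2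
  have := h3 b _ _ hb hc' hd'
  rw [inf_eq_zero_of_le_of_le hb hc' le_rfl inf_le_right (hba s),
    inf_eq_zero_of_le_of_le hb hd' le_rfl inf_le_right (hba t),
    inf_eq_zero_of_le_of_le hc' hd' inf_le_left inf_le_left hcd] at this
  simp only [map_zero, add_zero, mul_zero] at this
  exact (lt_min (lt_min hmb hs) ht).not_ge this

lemma exists_le_almost_disjoint (hm : IsPositive m) (ha : 0 ≤ a) (hc : 0 ≤ c) {ε : ℝ} (hε : 0 < ε) :
    ∃ c', 0 ≤ c' ∧ c' ≤ c ∧ m c - bandComponent m a c ≤ m c' ∧ m (a ⊓ c') < ε := by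
  obtain ⟨t, ht⟩ := exists_lt_apply_inf (m := m) (a := a) (x := c) hε
  set y := c ⊓ (t : ℝ) • a
  have hy₀ : 0 ≤ y := le_inf hc (smul_nonneg t.2 ha)
  have hsplit : bandComponent m a c = bandComponent m a (c - y) + m y := by
    rw [← bandComponent_eq_of_le hm (inf_le_right : y ≤ (t : ℝ) • a),
      ← bandComponent_add hm ha (sub_nonneg.2 inf_le_left) hy₀, sub_add_cancel]
  refine ⟨c - y, sub_nonneg.2 inf_le_left, sub_le_self c hy₀, ?_, ?_⟩
  · rw [map_sub]
    linarith [apply_inf_le_bandComponent (a := a) hm c t]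
  · have := apply_inf_le_bandComponent (a := a) hm (c - y) 1
    rw [NNReal.coe_one, one_smul, inf_comm] at this
    linarith

lemma sub_bandComponent_eq_zero_or (hm : IsPositive m) (h3 : NoAlmostDisjointTriple m)
    (ha : 0 ≤ a) (hma : 0 < m a) (hc : 0 ≤ c) (hd : 0 ≤ d) (hcd : c ⊓ d = 0) :
    m c - bandComponent m a c = 0 ∨ m d - bandComponent m a d = 0 := by
  by_contra! h
  set μ := m a ⊓ (m c - bandComponent m a c) ⊓ (m d - bandComponent m a d)
  have hμ : 0 < μ := lt_min (lt_min hma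
    ((sub_nonneg.2 (bandComponent_le hm c)).lt_of_ne' h.1))
    ((sub_nonneg.2 (bandComponent_le hm d)).lt_of_ne' h.2)
  have hε : 0 < μ / 6 := by positivity
  obtain ⟨c', hc'₀, hc'c, hmc', hac'⟩ := exists_le_almost_disjoint hm ha hc hε
  obtain ⟨d', hd'₀, hd'd, hmd', had'⟩ := exists_le_almost_disjoint hm ha hd hε
  have := h3 a c' d' ha hc'₀ hd'₀
  rw [inf_eq_zero_of_le_of_le hc'₀ hd'₀ hc'c hd'd hcd, map_zero] at this
  have : μ ≤ m a ⊓ m c' ⊓ m d' := inf_le_inf (inf_le_inf le_rfl hmc') hmd'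
  linarith

theorem NoAlmostDisjointTriple.exists_isRieszHom_add (hm : IsPositive m)
    (h3 : NoAlmostDisjointTriple m) :
    ∃ f g : E →ₗ[ℝ] ℝ, IsRieszHom f ∧ IsRieszHom g ∧ m = f + g := by
  by_cases hdisj : ∀ c d : E, 0 ≤ c → 0 ≤ d → c ⊓ d = 0 → m c = 0 ∨ m d = 0
  · exact ⟨m, 0, hm.isRieszHom hdisj, fun _ _ => by simp, (add_zero m).symm⟩
  push Not at hdisj
  obtain ⟨a, b, ha, hb, hab, hma, hmb⟩ := hdisj
  obtain ⟨F, hF⟩ := exists_linearMap_eq_of_nonneg (bandComponent m a)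
    (fun _ _ => bandComponent_add hm ha) (fun _ x hr _ => bandComponent_smul ha hr x)
  have hmF : ∀ x, 0 ≤ x → (m - F) x = m x - bandComponent m a x := fun x hx => by
    rw [LinearMap.sub_apply, hF x hx]
  refine ⟨F, m - F, ?_, ?_, (add_sub_cancel F m).symm⟩
  · refine IsPositive.isRieszHom (fun x hx => hF x hx ▸ bandComponent_nonneg hm hx)
      fun c d hc hd hcd => ?_
    rw [hF c hc, hF d hd]
    exact bandComponent_eq_zero_or hm h3 ha hb hab ((hm b hb).lt_of_ne' hmb) hc hd hcd
  · refine IsPositive.isRieszHom (fun x hx => hmF x hx ▸ sub_nonneg.2 (bandComponent_le hm x))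
      fun c d hc hd hcd => ?_
    rw [hmF c hc, hmF d hd]
    exact sub_bandComponent_eq_zero_or hm h3 ha ((hm a ha).lt_of_ne' hma) hc hd hcd

end Splitting

theorem ker_grothendieck_iff_modulus_sum_riesz_homs (l p : X →ₗ[ℝ] ℝ)
    (hp : IsPosPartOf l p) :
    IsGrothendieckSubspace (LinearMap.ker l) ↔
      ∃ f g : X →ₗ[ℝ] ℝ, IsRieszHom f ∧ IsRieszHom g ∧ p + (p - l) = f + g := by
  have hlm : ∀ z, 0 ≤ z → |l z| ≤ (p + (p - l)) z := fun _ => hp.abs_apply_le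
  constructor
  · intro hG
    exact (hp.noAlmostDisjointTriple hG).exists_isRieszHom_add (isPositive_of_abs_apply_le hlm)
  · rintro ⟨f, g, hf, hg, hfg⟩
    obtain ⟨α, β, hl⟩ := exists_smul_add_smul_eq hf hg (hfg ▸ hlm)
    rw [← hl]
    exact isGrothendieckSubspace_ker_smul_add_smul hf hg α β
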